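/- Parallelization is a closure operator with respect to Weihrauch reducibility: f ≤_W f̂, (f̂)̂ ≤_W f̂, and f ≤_W g implies f̂ ≤_W ĝ. -/

import Mathlib

open scoped Classical

/-! ## Basic notions of Weihrauch complexity -/

/-- The finite prefix of length `m` of a point of Baire space, as a list. -/
def pref (p : ℕ → ℕ) (m : ℕ) : List ℕ := List.ofFn (fun i : Fin m => p i)

/-- Type-2 computability of a partial function on Baire space, defined via monotone
computable word functions producing longer and longer prefixes of the output. -/
def BaireComputable (F : (ℕ → ℕ) →. (ℕ → ℕ)) : Prop :=
  ∃ ψ : List ℕ → List ℕ, Computable ψ ∧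
    (∀ u v : List ℕ, u <+: v → ψ u <+: ψ v) ∧
    ∀ p q, q ∈ F p → ∀ n, ∃ m, (ψ (pref p m))[n]? = some (q n)

/-- The interleaving pairing `⟨p,q⟩` on Baire space. -/
def pairB (p q : ℕ → ℕ) : ℕ → ℕ := fun n => if n % 2 = 0 then p (n / 2) else q (n / 2)

def evenPart (r : ℕ → ℕ) : ℕ → ℕ := fun n => r (2 * n)

def oddPart (r : ℕ → ℕ) : ℕ → ℕ := fun n => r (2 * n + 1)

/-- The `i`-th component of the countable tupling `⟨p₀,p₁,…⟩⟨i,k⟩ = pᵢ(k)`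
(using the Cantor pairing). -/
def proj (r : ℕ → ℕ) (i : ℕ) : ℕ → ℕ := fun k => r (Nat.pair i k)

/-- A represented space: a set `X` together with a surjective partial map
from Baire space onto `X`. -/
structure RepSp (X : Type*) where
  δ : (ℕ → ℕ) →. X
  surj : ∀ x : X, ∃ p, x ∈ δ p

theorem mem_part_mk {α : Type*} {D : Prop} {g : D → α} {a : α} (h : D) (e : g h = a) :
    a ∈ Part.mk D g := Part.mem_mk_iff.mpr ⟨h, e⟩

/-- The identity representation of Baire space. -/
def repBaire : RepSp (ℕ → ℕ) where
  δ := fun p => Part.some p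
  surj := fun p => ⟨p, Part.mem_some p⟩

/-- The standard representation of the natural numbers. -/
def repNat : RepSp ℕ where
  δ := fun p => Part.some (p 0)
  surj := fun n => ⟨fun _ => n, Part.mem_some n⟩

/-- `F` is a realizer of the problem `f :⊆ X ⇉ Y` (a problem is a multi-valued
function `f : X → Set Y`, whose domain is the set of `x` with `f x` nonempty). -/
def Realizes {X Y : Type*} (δX : RepSp X) (δY : RepSp Y)
    (f : X → Set Y) (F : (ℕ → ℕ) →. (ℕ → ℕ)) : Prop :=
  ∀ p x, x ∈ δX.δ p → (f x).Nonempty → ∃ q ∈ F p, ∃ y ∈ δY.δ q, y ∈ f x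

/-- Weihrauch reducibility: `f ≤_W g` iff there are computable `H, K` such that
`p ↦ H⟨p, G(K(p))⟩` realizes `f` whenever `G` realizes `g`. -/
def WRed {X Y Z W : Type*} (δX : RepSp X) (δY : RepSp Y) (δZ : RepSp Z) (δW : RepSp W)
    (f : X → Set Y) (g : Z → Set W) : Prop :=
  ∃ H K : (ℕ → ℕ) →. (ℕ → ℕ), BaireComputable H ∧ BaireComputable K ∧
    ∀ G : (ℕ → ℕ) →. (ℕ → ℕ), Realizes δZ δW g G →
      Realizes δX δY f
        (fun p => (K p).bind fun r => (G r).bind fun q => H (pairB p q))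

/-- Strong Weihrauch reducibility: `f ≤_sW g` iff there are computable `H, K`
such that `H ∘ G ∘ K` realizes `f` whenever `G` realizes `g`. -/
def SWRed {X Y Z W : Type*} (δX : RepSp X) (δY : RepSp Y) (δZ : RepSp Z) (δW : RepSp W)
    (f : X → Set Y) (g : Z → Set W) : Prop :=
  ∃ H K : (ℕ → ℕ) →. (ℕ → ℕ), BaireComputable H ∧ BaireComputable K ∧
    ∀ G : (ℕ → ℕ) →. (ℕ → ℕ), Realizes δZ δW g G →
      Realizes δX δY f (fun p => (K p).bind fun r => (G r).bind fun q => H q)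

/-- Weihrauch equivalence. -/
def WEquiv {X Y Z W : Type*} (δX : RepSp X) (δY : RepSp Y) (δZ : RepSp Z) (δW : RepSp W)
    (f : X → Set Y) (g : Z → Set W) : Prop :=
  WRed δX δY δZ δW f g ∧ WRed δZ δW δX δY g f

/-- Strong Weihrauch equivalence. -/
def SWEquiv {X Y Z W : Type*} (δX : RepSp X) (δY : RepSp Y) (δZ : RepSp Z) (δW : RepSp W)
    (f : X → Set Y) (g : Z → Set W) : Prop :=
  SWRed δX δY δZ δW f g ∧ SWRed δZ δW δX δY g f

/-- The identity problem on Baire space. -/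
def idProblem : (ℕ → ℕ) → Set (ℕ → ℕ) := fun p => {p}

/-! ## Constructions on representations and problems -/

/-- Representation of the product of two represented spaces. -/
def prodRep {X Z : Type*} (δX : RepSp X) (δZ : RepSp Z) : RepSp (X × Z) where
  δ := fun r => (δX.δ (evenPart r)).bind fun x => (δZ.δ (oddPart r)).map fun z => (x, z)
  surj := by
    intro xz
    obtain ⟨p, hp⟩ := δX.surj xz.1
    obtain ⟨q, hq⟩ := δZ.surj xz.2
    have he : evenPart (pairB p q) = p := by
      funext n
      have h1 : (2 * n) % 2 = 0 := by omega
      have h2 : (2 * n) / 2 = n := by omega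
      simp [evenPart, pairB, h1, h2]
    have ho : oddPart (pairB p q) = q := by
      funext n
      have h1 : ¬((2 * n + 1) % 2 = 0) := by omega
      have h2 : (2 * n + 1) / 2 = n := by omega
      simp [oddPart, pairB, h1, h2]
    refine ⟨pairB p q, Part.mem_bind_iff.mpr ⟨xz.1, by rw [he]; exact hp,
      (Part.mem_map_iff _).mpr ⟨xz.2, by rw [ho]; exact hq, rfl⟩⟩⟩

/-- The product `f × g` of two problems. -/
def prodProblem {X Y Z W : Type*} (f : X → Set Y) (g : Z → Set W) :
    X × Z → Set (Y × W) :=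
  fun xz => f xz.1 ×ˢ g xz.2

/-- Representation of the disjoint union of two represented spaces. -/
def sumRep {X Z : Type*} (δX : RepSp X) (δZ : RepSp Z) : RepSp (X ⊕ Z) where
  δ := fun r =>
    if r 0 = 0 then (δX.δ fun n => r (n + 1)).map Sum.inl
    else if r 0 = 1 then (δZ.δ fun n => r (n + 1)).map Sum.inr
    else Part.none
  surj := by
    rintro (x | z)
    · obtain ⟨p, hp⟩ := δX.surj x
      refine ⟨fun n => Nat.casesOn n 0 p, ?_⟩
      show Sum.inl x ∈ (δX.δ p).map Sum.inl
      exact (Part.mem_map_iff _).mpr ⟨x, hp, rfl⟩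
    · obtain ⟨p, hp⟩ := δZ.surj z
      refine ⟨fun n => Nat.casesOn n 1 p, ?_⟩
      show Sum.inr z ∈ (δZ.δ p).map Sum.inr
      exact (Part.mem_map_iff _).mpr ⟨z, hp, rfl⟩

/-- The coproduct `f ⊔ g` of two problems. -/
def coprodProblem {X Y Z W : Type*} (f : X → Set Y) (g : Z → Set W) :
    X ⊕ Z → Set (Y ⊕ W)
  | Sum.inl x => Sum.inl '' f x
  | Sum.inr z => Sum.inr '' g z

/-- The meet `f ⊓ g` of two problems. -/
def meetProblem {X Y Z W : Type*} (f : X → Set Y) (g : Z → Set W) :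
    X × Z → Set (Y ⊕ W) :=
  fun xz => Sum.inl '' f xz.1 ∪ Sum.inr '' g xz.2

/-- Representation of the space of sequences `X^ℕ` via the countable tupling. -/
noncomputable def seqRep {X : Type*} (δX : RepSp X) : RepSp (ℕ → X) where
  δ := fun r => Part.mk (∀ i : ℕ, ∃ x, x ∈ δX.δ (proj r i))
    (fun h i => Classical.choose (h i))
  surj := by
    intro x
    choose p hp using fun i => δX.surj (x i)
    refine ⟨fun m => p (Nat.unpair m).1 (Nat.unpair m).2, ?_⟩
    have hproj : ∀ i, proj (fun m => p (Nat.unpair m).1 (Nat.unpair m).2) i = p i := by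
      intro i; funext k; simp [proj]
    have hdom : ∀ i : ℕ, ∃ y, y ∈ δX.δ (proj (fun m => p (Nat.unpair m).1 (Nat.unpair m).2) i) :=
      fun i => ⟨x i, by rw [hproj i]; exact hp i⟩
    refine mem_part_mk hdom ?_
    funext i
    exact Part.mem_unique (Classical.choose_spec (hdom i)) (by rw [hproj i]; exact hp i)

/-- The parallelization `f̂` of a problem. -/
def parallelProblem {X Y : Type*} (f : X → Set Y) : (ℕ → X) → Set (ℕ → Y) :=
  fun x => {y | ∀ i, y i ∈ f (x i)}

/-- Representation of the finite power `Xⁿ` via the countable tupling. -/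
noncomputable def finProdRep (n : ℕ) {X : Type*} (δX : RepSp X) : RepSp (Fin n → X) where
  δ := fun r => Part.mk (∀ i : Fin n, ∃ x, x ∈ δX.δ (proj r i))
    (fun h i => Classical.choose (h i))
  surj := by
    intro x
    choose p hp using fun i => δX.surj (x i)
    classical
    refine ⟨fun m => if h : (Nat.unpair m).1 < n then p ⟨_, h⟩ (Nat.unpair m).2 else 0, ?_⟩
    have hproj : ∀ i : Fin n,
        proj (fun m => if h : (Nat.unpair m).1 < n then p ⟨_, h⟩ (Nat.unpair m).2 else 0) i
          = p i := by
      intro i; funext k; simp [proj, i.isLt]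
    have hdom : ∀ i : Fin n, ∃ y, y ∈ δX.δ
        (proj (fun m => if h : (Nat.unpair m).1 < n then p ⟨_, h⟩ (Nat.unpair m).2 else 0) i) :=
      fun i => ⟨x i, by rw [hproj i]; exact hp i⟩
    refine mem_part_mk hdom ?_
    funext i
    exact Part.mem_unique (Classical.choose_spec (hdom i)) (by rw [hproj i]; exact hp i)

/-- The `n`-fold product `fⁿ` of a problem with itself. -/
def finProdProblem (n : ℕ) {X Y : Type*} (f : X → Set Y) :
    (Fin n → X) → Set (Fin n → Y) :=
  fun x => {y | ∀ i, y i ∈ f (x i)}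

/-- Representation of the space `X*` of words over `X`. -/
noncomputable def starRep {X : Type*} (δX : RepSp X) : RepSp (Σ n : ℕ, Fin n → X) where
  δ := fun r => Part.mk (∀ i : Fin (r 0), ∃ x, x ∈ δX.δ (proj (fun m => r (m + 1)) i))
    (fun h => ⟨r 0, fun i => Classical.choose (h i)⟩)
  surj := by
    rintro ⟨n, x⟩
    choose p hp using fun i => δX.surj (x i)
    classical
    have hproj : ∀ i : Fin n,
        proj (fun m' => if h : (Nat.unpair m').1 < n then p ⟨_, h⟩ (Nat.unpair m').2 else 0) i
          = p i := by
      intro i; funext k; simp [proj, i.isLt]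
    have hdom : ∀ i : Fin n, ∃ y, y ∈ δX.δ
        (proj (fun m' => if h : (Nat.unpair m').1 < n then p ⟨_, h⟩ (Nat.unpair m').2 else 0) i) :=
      fun i => ⟨x i, by rw [hproj i]; exact hp i⟩
    refine ⟨fun m => Nat.casesOn m n
      (fun m' => if h : (Nat.unpair m').1 < n then p ⟨_, h⟩ (Nat.unpair m').2 else 0),
      Part.mem_mk_iff.mpr ⟨hdom, ?_⟩⟩
    have hx : (fun i : Fin n => Classical.choose (hdom i)) = x := funext fun i =>
      Part.mem_unique (Classical.choose_spec (hdom i)) (by rw [hproj i]; exact hp i)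
    exact congrArg (Sigma.mk n) hx

/-- The finite parallelization `f*` of a problem. -/
def starProblem {X Y : Type*} (f : X → Set Y) :
    (Σ n : ℕ, Fin n → X) → Set (Σ n : ℕ, Fin n → Y) :=
  fun x => {y | ∃ e : x.1 = y.1, ∀ i : Fin x.1, y.2 (Fin.cast e i) ∈ f (x.2 i)}

/-- Representation of a countable disjoint union of represented spaces. -/
def csumRep {Z : ℕ → Type*} (δZ : ∀ i, RepSp (Z i)) : RepSp (Σ i, Z i) where
  δ := fun r => ((δZ (r 0)).δ (fun n => r (n + 1))).map fun z => ⟨r 0, z⟩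
  surj := by
    rintro ⟨i, z⟩
    obtain ⟨p, hp⟩ := (δZ i).surj z
    exact ⟨fun n => Nat.casesOn n i p, (Part.mem_map_iff _).mpr ⟨z, hp, rfl⟩⟩

/-- The countable coproduct `⊔ᵢ gᵢ` of a sequence of problems. -/
def csumProblem {Z W : ℕ → Type*} (g : ∀ i, Z i → Set (W i)) :
    (Σ i, Z i) → Set (Σ i, W i) :=
  fun x => Sigma.mk x.1 '' g x.1 x.2

/-! ## Limits and jumps -/

/-- The limit map on Baire space, as a (single-valued) problem:
`lim⟨p₀,p₁,…⟩` is the pointwise limit of the sequence `(pₙ)ₙ`. -/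
def limProblem : (ℕ → ℕ) → Set (ℕ → ℕ) :=
  fun r => {q | ∀ n, ∃ N, ∀ m, N ≤ m → proj r m n = q n}

/-- The limit map on Baire space as a partial (single-valued) function. -/
noncomputable def limP : (ℕ → ℕ) →. (ℕ → ℕ) :=
  fun r => Part.mk (∀ n, ∃ N, ∀ m, N ≤ m → proj r m n = proj r N n)
    (fun h n => proj r (Classical.choose (h n)) n)

/-- The jump `(X′, δ′)` of a represented space: `δ′ := δ ∘ lim`. -/
noncomputable def jumpRep {X : Type*} (δ : RepSp X) : RepSp X where
  δ := fun p => (limP p).bind δ.δ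
  surj := by
    intro x
    obtain ⟨p, hp⟩ := δ.surj x
    refine ⟨fun m => p (Nat.unpair m).2, Part.mem_bind_iff.mpr ⟨p, ?_, hp⟩⟩
    have hproj : ∀ m, proj (fun m => p (Nat.unpair m).2) m = p := by
      intro m; funext k; simp [proj]
    have hdom : ∀ n, ∃ N, ∀ m, N ≤ m →
        proj (fun m => p (Nat.unpair m).2) m n = proj (fun m => p (Nat.unpair m).2) N n :=
      fun n => ⟨0, fun m _ => by rw [hproj m, hproj 0]⟩
    refine mem_part_mk hdom ?_
    funext n
    rw [hproj]

/-! ## Choice problems -/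

/-- The representation of subsets of `ℕ` by enumerations of their complements:
`p` is a name of `A` iff `p` enumerates (via `p m = n + 1`) exactly the `n ∉ A`. -/
def enumNegRep : RepSp (Set ℕ) where
  δ := fun p => Part.some {n | ∀ m, p m ≠ n + 1}
  surj := by
    intro S
    by_cases h : Sᶜ.Nonempty
    · obtain ⟨f, hf⟩ := (Set.to_countable Sᶜ).exists_eq_range h
      refine ⟨fun m => f m + 1, Part.mem_some_iff.mpr ?_⟩
      ext n
      simp only [Set.mem_setOf_eq]
      constructor
      · intro hn m hm
        have hfm : f m ∈ Sᶜ := by rw [hf]; exact ⟨m, rfl⟩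
        have hfmn : f m = n := by omega
        rw [hfmn] at hfm
        exact hfm hn
      · intro hn
        by_contra hS
        have hmem : n ∈ Sᶜ := hS
        rw [hf] at hmem
        obtain ⟨m, hm⟩ := hmem
        exact hn m (by omega)
    · refine ⟨fun _ => 0, Part.mem_some_iff.mpr ?_⟩
      have hS : S = Set.univ := by
        rw [← compl_compl S, Set.not_nonempty_iff_eq_empty.mp h, Set.compl_empty]
      rw [hS]
      ext n
      simp

/-- Choice on the natural numbers: given (a name of) a nonempty set `A ⊆ ℕ`,
find an element of `A`. -/
def CNat : Set ℕ → Set ℕ := fun A => A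

/-- Choice on the finite set `{0, …, k-1}`. -/
def CFin (k : ℕ) : Set ℕ → Set ℕ := fun A => {n | n ∈ A ∧ A ⊆ Set.Iio k}

/-- The limited principle of omniscience as a problem. -/
noncomputable def LPOProblem : (ℕ → ℕ) → Set ℕ :=
  fun p => {if ∃ k, p k = 0 then 1 else 0}


/-- Restriction of a problem on Baire space to a set `A`. -/
def restrictProblem (F : (ℕ → ℕ) → Set (ℕ → ℕ)) (A : Set (ℕ → ℕ)) :
    (ℕ → ℕ) → Set (ℕ → ℕ) :=
  fun p => {q | q ∈ F p ∧ p ∈ A}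

/-- A problem is a fractal if it has a representative on Baire space all of whose
restrictions to clopen sets meeting its domain are Weihrauch equivalent to it. -/
def Fractal {X Y : Type*} (δX : RepSp X) (δY : RepSp Y) (f : X → Set Y) : Prop :=
  ∃ F : (ℕ → ℕ) → Set (ℕ → ℕ),
    WEquiv repBaire repBaire δX δY F f ∧
    ∀ A : Set (ℕ → ℕ), IsClopen A → (A ∩ {p | (F p).Nonempty}).Nonempty →
      WEquiv repBaire repBaire repBaire repBaire (restrictProblem F A) F

/-- A problem `f` is densely realized if for every name `p` of an admissible instance
the set of names of solutions is dense in the domain of the output representation. -/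
def DenselyRealized {X Y : Type*} (δX : RepSp X) (δY : RepSp Y) (f : X → Set Y) : Prop :=
  ∀ p, ∀ x ∈ δX.δ p, (f x).Nonempty →
    {q : ℕ → ℕ | (δY.δ q).Dom} ⊆ closure {q : ℕ → ℕ | ∃ y ∈ δY.δ q, y ∈ f x}

/-- Turing reducibility on Baire space: `a` is computable from `b`. -/
def TRed (a b : ℕ → ℕ) : Prop := ∃ F, BaireComputable F ∧ a ∈ F b

/-- The two-point space `{p, q}` represented by the identity. -/
def pqRep (p q : ℕ → ℕ) : RepSp {r : ℕ → ℕ // r = p ∨ r = q} where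
  δ := fun r => Part.mk (r = p ∨ r = q) (fun h => ⟨r, h⟩)
  surj := fun x => ⟨x.1, Part.mem_mk_iff.mpr ⟨x.2, rfl⟩⟩

/-- The problem `m_A` associated with a set `A ⊆ ℕ`. -/
noncomputable def mProblem (p q : ℕ → ℕ) (A : Set ℕ) :
    ℕ → Set {r : ℕ → ℕ // r = p ∨ r = q} :=
  fun n => {y | y.1 = if n ∈ A then p else q}

/-- The join `A ⊕ B` of two sets of natural numbers. -/
def mJoin (A B : Set ℕ) : Set ℕ :=
  {k | (k % 2 = 0 ∧ k / 2 ∈ A) ∨ (k % 2 = 1 ∧ k / 2 ∈ B)}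

/-- The cardinality `#f` of a problem: the supremum of the cardinalities of sets
`M ⊆ dom f` whose images under `f` are pairwise disjoint. -/
noncomputable def problemCard {X Y : Type} (f : X → Set Y) : Cardinal :=
  sSup {c | ∃ M : Set X, (∀ x ∈ M, (f x).Nonempty) ∧ M.PairwiseDisjoint f ∧
    c = Cardinal.mk M}

/-- Computability of a problem: it has a computable realizer. -/
def ComputableProblem {X Y : Type*} (δX : RepSp X) (δY : RepSp Y) (f : X → Set Y) : Prop :=
  ∃ F, BaireComputable F ∧ Realizes δX δY f F

/-- The minimum function on Baire space. -/
def minProblem : (ℕ → ℕ) → Set ℕ :=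
  fun p => {n | n ∈ Set.range p ∧ ∀ m, n ≤ p m}

/-- The complementary minimum function `minᶜ`. -/
def mincProblem : (ℕ → ℕ) → Set ℕ :=
  fun p => {n | (∀ m, p m ≠ n) ∧ ∀ j, j < n → ∃ m, p m = j}

/-- The maximum function on Baire space (defined on bounded sequences). -/
def maxProblem : (ℕ → ℕ) → Set ℕ :=
  fun p => {n | n ∈ Set.range p ∧ ∀ m, p m ≤ n}

/-!
The first two reductions only reindex names: a name of `x` becomes a name of the constant
sequence `(x, x, …)`, and a name of a double sequence becomes a name of a single sequence along
`ℕ × ℕ ≃ ℕ`. For monotonicity, a reduction `f ≤_W g` is run on all components at once. Its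
pre- and postprocessors are applied componentwise, which is computable because the word function
of a computable map can be evaluated on the part of each component already read. The `i`-th
postprocessing step is justified by applying the reduction to the realizer of `g` that answers
the `i`-th query by the `i`-th component of the answer of `ĝ`.
-/

/-- The length of the longest initial segment of `[0, k)` on which `p` holds. -/
def initLen (p : ℕ → Bool) : ℕ → ℕ
  | 0 => 0
  | k + 1 => if initLen p k = k ∧ p k then k + 1 else initLen p k

theorem initLen_le (p : ℕ → Bool) : ∀ k, initLen p k ≤ k
  | 0 => le_rfl
  | k + 1 => by
    unfold initLen
    split_ifs
    · exact le_rfl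
    · exact (initLen_le p k).trans k.le_succ

theorem initLen_mono (p : ℕ → Bool) : Monotone (initLen p) := by
  refine monotone_nat_of_le_succ fun k => ?_
  conv_rhs => unfold initLen
  split_ifs
  · exact (initLen_le p k).trans k.le_succ
  · exact le_rfl

theorem apply_of_lt_initLen {p : ℕ → Bool} {n : ℕ} : ∀ {k}, n < initLen p k → p n
  | 0, h => absurd h (Nat.not_lt_zero n)
  | k + 1, h => by
    unfold initLen at h
    split_ifs at h with hk
    · rcases Nat.lt_succ_iff_lt_or_eq.mp h with h | rfl
      · exact apply_of_lt_initLen (hk.1 ▸ h)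
      · exact hk.2
    · exact apply_of_lt_initLen h

theorem le_initLen {p : ℕ → Bool} {l : ℕ} : ∀ {k}, l ≤ k → (∀ n < l, p n) → l ≤ initLen p k
  | 0, hl, _ => hl
  | k + 1, hl, hp => by
    rcases hl.lt_or_eq with hl | rfl
    · exact (le_initLen (Nat.lt_succ_iff.mp hl) hp).trans (initLen_mono p k.le_succ)
    · have hk : initLen p k = k :=
        (initLen_le p k).antisymm (le_initLen le_rfl fun n hn => hp n (hn.trans k.lt_succ_self))
      simp [initLen, hk, hp k k.lt_succ_self]

/-- The longest initial segment of `[e 0, …, e (k-1)]` consisting of defined values. -/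
def definedPrefix (e : ℕ → Option ℕ) (k : ℕ) : List ℕ :=
  (List.range (initLen (fun n => (e n).isSome) k)).map fun n => (e n).getD 0

theorem length_definedPrefix (e : ℕ → Option ℕ) (k : ℕ) :
    (definedPrefix e k).length = initLen (fun n => (e n).isSome) k := by
  simp [definedPrefix]

theorem getElem?_definedPrefix {e : ℕ → Option ℕ} {k n : ℕ}
    (hn : n < (definedPrefix e k).length) : (definedPrefix e k)[n]? = e n := by
  rw [length_definedPrefix] at hn
  obtain ⟨a, ha⟩ := Option.isSome_iff_exists.mp (apply_of_lt_initLen hn)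
  simp [definedPrefix, hn, ha]

theorem le_length_definedPrefix {e : ℕ → Option ℕ} {k l : ℕ} (hl : l ≤ k)
    (he : ∀ n < l, (e n).isSome) : l ≤ (definedPrefix e k).length := by
  rw [length_definedPrefix]
  exact le_initLen hl he

theorem definedPrefix_prefix {e e' : ℕ → Option ℕ} {k k' : ℕ} (hk : k ≤ k')
    (he : ∀ n a, e n = some a → e' n = some a) : definedPrefix e k <+: definedPrefix e' k' := by
  have hdef : ∀ m < (definedPrefix e k).length, ∃ a, e m = some a ∧ e' m = some a := by
    intro m hm
    obtain ⟨a, ha⟩ := Option.isSome_iff_exists.mp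
      (apply_of_lt_initLen ((length_definedPrefix e k).symm ▸ hm))
    exact ⟨a, ha, he m a ha⟩
  refine List.prefix_iff_getElem?.mpr fun n hn => ?_
  have hn' : n < (definedPrefix e' k').length := by
    refine le_length_definedPrefix ?_ fun m hm => ?_
    · have := length_definedPrefix e k ▸ initLen_le _ k
      omega
    · obtain ⟨a, -, ha⟩ := hdef m (by omega)
      simp [ha]
  obtain ⟨a, ha, ha'⟩ := hdef n hn
  rw [getElem?_definedPrefix hn', ← List.getElem?_eq_getElem hn, getElem?_definedPrefix hn, ha, ha']

section Computability

variable {α : Type} [Primcodable α]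

theorem initLen_eq_rec (p : ℕ → Bool) (k : ℕ) :
    initLen p k = Nat.rec (motive := fun _ => ℕ) 0
      (fun y ih => bif decide (ih = y) && p y then y + 1 else ih) k := by
  induction k with
  | zero => rfl
  | succ k ih => rw [initLen, ih]; cases h : p k <;> simp [h]

theorem Computable.initLen {p : α → ℕ → Bool} (hp : Computable₂ p) {k : α → ℕ}
    (hk : Computable k) : Computable fun a => initLen (p a) (k a) := by
  refine (Computable.nat_rec hk (Computable.const 0)
    (h := fun a q => bif decide (q.2 = q.1) && p a q.1 then q.1 + 1 else q.2) ?_).of_eq fun a =>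
    (initLen_eq_rec (p a) (k a)).symm
  refine Computable.cond ?_ (Computable.succ.comp (Computable.fst.comp .snd))
    (Computable.snd.comp .snd)
  exact Primrec.and.to_comp.comp
    ((Primrec.eq.comp (Primrec.snd.comp .snd) (Primrec.fst.comp .snd)).decide.to_comp)
    (hp.comp Computable.fst (Computable.fst.comp .snd))

theorem Computable.list_map_range {β : Type} [Primcodable β] {g : α → ℕ → β}
    (hg : Computable₂ g) {k : α → ℕ} (hk : Computable k) :
    Computable fun a => (List.range (k a)).map (g a) := by
  refine (Computable.nat_rec hk (Computable.const [])
    (h := fun a q => q.2 ++ [g a q.1]) ?_).of_eq fun a => ?_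
  · exact Computable.list_concat.comp (Computable.snd.comp .snd)
      (hg.comp Computable.fst (Computable.fst.comp .snd))
  · induction k a with
    | zero => rfl
    | succ n ih => rw [List.range_succ, List.map_append, ← ih]; rfl

theorem Computable.definedPrefix {e : α → ℕ → Option ℕ} (he : Computable₂ e) {k : α → ℕ}
    (hk : Computable k) : Computable fun a => definedPrefix (e a) (k a) :=
  Computable.list_map_range (Computable.option_getD he (Computable.const 0)).to₂
    (Computable.initLen (Primrec.option_isSome.to_comp.comp₂ he) hk)

end Computability

theorem length_pref (p : ℕ → ℕ) (m : ℕ) : (pref p m).length = m := by simp [pref]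

theorem getElem?_pref {p : ℕ → ℕ} {m n : ℕ} (h : n < m) : (pref p m)[n]? = some (p n) := by
  simp [pref, h]

open Filter

theorem List.getElem?_eq_some_of_prefix {α : Type*} {u v : List α} (h : u <+: v) {n : ℕ}
    {a : α} (ha : u[n]? = some a) : v[n]? = some a := by
  obtain ⟨hn, rfl⟩ := List.getElem?_eq_some_iff.mp ha
  exact List.prefix_iff_getElem?.mp h n hn

def tuple (r : ℕ → ℕ → ℕ) : ℕ → ℕ := fun m => r m.unpair.1 m.unpair.2

@[simp]
theorem proj_tuple (r : ℕ → ℕ → ℕ) (i : ℕ) : proj (tuple r) i = r i := by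
  funext k
  simp [proj, tuple]

@[simp]
theorem tuple_proj (q : ℕ → ℕ) : tuple (proj q) = q := by
  funext m
  simp [proj, tuple]

section Componentwise

def componentwise (F : (ℕ → ℕ) →. (ℕ → ℕ)) (τ : ℕ → ℕ → ℕ) : (ℕ → ℕ) →. (ℕ → ℕ) :=
  fun p => Part.mk (∀ i, (F fun j => p (τ i j)).Dom) fun h => tuple fun i => (F _).get (h i)

theorem mem_componentwise_iff {F : (ℕ → ℕ) →. (ℕ → ℕ)} {τ : ℕ → ℕ → ℕ} {p q : ℕ → ℕ} :
    q ∈ componentwise F τ p ↔ ∀ i, proj q i ∈ F fun j => p (τ i j) := by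
  simp only [componentwise, Part.mem_mk_iff]
  constructor
  · rintro ⟨hdom, rfl⟩ i
    rw [proj_tuple]
    exact Part.get_mem (hdom i)
  · intro hq
    refine ⟨fun i => Part.dom_iff_mem.mpr ⟨_, hq i⟩, ?_⟩
    conv_rhs => rw [← tuple_proj q]
    exact congrArg tuple (funext fun i => Part.get_eq_of_mem (hq i) _)

variable {ψ : List ℕ → List ℕ} {τ : ℕ → ℕ → ℕ}

/-- The longest prefix of the component `fun j => p (τ i j)` that can be read off a prefix `u`
of `p`. -/
def readComponent (τ : ℕ → ℕ → ℕ) (u : List ℕ) (i : ℕ) : List ℕ :=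
  definedPrefix (fun j => u[τ i j]?) u.length

def componentwiseWord (ψ : List ℕ → List ℕ) (τ : ℕ → ℕ → ℕ) (u : List ℕ) : List ℕ :=
  definedPrefix (fun n => (ψ (readComponent τ u n.unpair.1))[n.unpair.2]?) u.length

theorem readComponent_prefix {u v : List ℕ} (h : u <+: v) (i : ℕ) :
    readComponent τ u i <+: readComponent τ v i :=
  definedPrefix_prefix h.length_le fun _ _ => List.getElem?_eq_some_of_prefix h

theorem componentwiseWord_prefix (hψ : ∀ u v : List ℕ, u <+: v → ψ u <+: ψ v) {u v : List ℕ}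
    (h : u <+: v) : componentwiseWord ψ τ u <+: componentwiseWord ψ τ v :=
  definedPrefix_prefix h.length_le fun _ _ =>
    List.getElem?_eq_some_of_prefix (hψ _ _ (readComponent_prefix h _))

theorem Computable.componentwiseWord (hψ : Computable ψ) (hτ : Primrec₂ τ) :
    Computable (componentwiseWord ψ τ) := by
  have hread : Computable₂ (readComponent τ) :=
    Computable.definedPrefix (e := fun (x : List ℕ × ℕ) j => x.1[τ x.2 j]?)
      (Primrec.list_getElem?.comp (Primrec.fst.comp .fst)
        (hτ.comp (Primrec.snd.comp .fst) .snd)).to_comp.to₂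
      (Computable.list_length.comp .fst)
  exact Computable.definedPrefix
    (Computable.list_getElem?.comp (hψ.comp (hread.comp .fst (Computable.fst.comp
      (Computable.unpair.comp .snd)))) (Computable.snd.comp (Computable.unpair.comp .snd))).to₂
    Computable.list_length

theorem eventually_pref_prefix_readComponent (p : ℕ → ℕ) (τ : ℕ → ℕ → ℕ) (i l : ℕ) :
    ∀ᶠ m in atTop, pref (fun j => p (τ i j)) l <+: readComponent τ (pref p m) i := by
  filter_upwards [eventually_ge_atTop l,
    (Set.finite_Iio l).eventually_all.2 fun j _ => eventually_gt_atTop (τ i j)] with m hlm hτm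
  have hread : ∀ j < l, (pref p m)[τ i j]? = some (p (τ i j)) :=
    fun j hj => getElem?_pref (hτm j hj)
  have hlen : l ≤ (readComponent τ (pref p m) i).length :=
    le_length_definedPrefix ((length_pref p m).symm ▸ hlm) fun j hj => by simp [hread j hj]
  refine List.prefix_iff_getElem?.mpr fun j hj => ?_
  rw [length_pref] at hj
  rw [readComponent, getElem?_definedPrefix (hj.trans_le hlen), hread j hj]
  simp [pref]

theorem BaireComputable.componentwise {F : (ℕ → ℕ) →. (ℕ → ℕ)} (hF : BaireComputable F)
    (hτ : Primrec₂ τ) : BaireComputable (componentwise F τ) := by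
  obtain ⟨ψ, hψc, hψm, hψF⟩ := hF
  refine ⟨componentwiseWord ψ τ, hψc.componentwiseWord hτ,
    fun u v => componentwiseWord_prefix hψm, fun p q hq n => ?_⟩
  have hentry : ∀ n, ∀ᶠ m in atTop,
      (ψ (readComponent τ (pref p m) n.unpair.1))[n.unpair.2]? = some (q n) := by
    intro n
    obtain ⟨l, hl⟩ := hψF _ _ (mem_componentwise_iff.mp hq n.unpair.1) n.unpair.2
    filter_upwards [eventually_pref_prefix_readComponent p τ n.unpair.1 l] with m hm
    simpa [proj] using List.getElem?_eq_some_of_prefix (hψm _ _ hm) hl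
  obtain ⟨m, hm, hnm⟩ := ((Set.finite_Iic n).eventually_all.2 fun n' _ => hentry n').and
    (eventually_gt_atTop n) |>.exists
  have hlen : n < (componentwiseWord ψ τ (pref p m)).length :=
    le_length_definedPrefix ((length_pref p m).symm ▸ hnm) fun n' hn' => by
      simp [hm n' (Nat.lt_succ_iff.mp hn')]
  refine ⟨m, ?_⟩
  rw [componentwiseWord, getElem?_definedPrefix hlen]
  exact hm n (Set.mem_Iic.mpr le_rfl)

end Componentwise

theorem pairB_two_mul (p q : ℕ → ℕ) (n : ℕ) : pairB p q (2 * n) = p n := by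
  rw [pairB, if_pos (by omega), Nat.mul_div_cancel_left n two_pos]

theorem pairB_two_mul_add_one (p q : ℕ → ℕ) (n : ℕ) : pairB p q (2 * n + 1) = q n := by
  rw [pairB, if_neg (by omega), show (2 * n + 1) / 2 = n by omega]

theorem pairB_comp_interleave (p q : ℕ → ℕ) (i : ℕ) :
    (fun j => pairB p q (2 * Nat.pair i (j / 2) + j % 2)) = pairB (proj p i) (proj q i) := by
  funext j
  rcases Nat.mod_two_eq_zero_or_one j with hj | hj
  · rw [hj, add_zero, pairB_two_mul]
    simp [pairB, hj, proj]
  · rw [hj, pairB_two_mul_add_one]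
    simp [pairB, hj, proj]

theorem BaireComputable.comp_primrec {σ : ℕ → ℕ} (hσ : Primrec σ) :
    BaireComputable fun p => Part.some (p ∘ σ) := by
  have hid : BaireComputable fun p : ℕ → ℕ => Part.some p :=
    ⟨id, Computable.id, fun _ _ h => h, fun p q hq n =>
      ⟨n + 1, (Part.mem_some_iff.mp hq).symm ▸ getElem?_pref n.lt_succ_self⟩⟩
  have hsome : (fun p => Part.some (p ∘ σ)) = _root_.componentwise (fun p => Part.some p)
      fun i j => σ (Nat.pair i j) := funext fun p =>
    (Part.eq_some_iff.mpr (mem_componentwise_iff.mpr fun i => Part.mem_some _)).symm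
  exact hsome ▸ hid.componentwise (hσ.comp Primrec₂.natPair)

theorem mem_seqRep_iff {X : Type*} {δX : RepSp X} {r : ℕ → ℕ} {x : ℕ → X} :
    x ∈ (seqRep δX).δ r ↔ ∀ i, x i ∈ δX.δ (proj r i) := by
  refine ⟨fun ⟨hdom, hx⟩ i => hx ▸ Classical.choose_spec (hdom i), fun hx => ?_⟩
  have hdom : ∀ i, ∃ y, y ∈ δX.δ (proj r i) := fun i => ⟨x i, hx i⟩
  exact mem_part_mk hdom (funext fun i => Part.mem_unique (Classical.choose_spec (hdom i)) (hx i))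

section Reductions

variable {X Y Z W : Type*} {δX : RepSp X} {δY : RepSp Y} {δZ : RepSp Z} {δW : RepSp W}
  {f : X → Set Y} {g : Z → Set W}

theorem Realizes.update {G : (ℕ → ℕ) →. (ℕ → ℕ)} (hG : Realizes δZ δW g G) {r q : ℕ → ℕ}
    {z : Z} {w : W} (hz : z ∈ δZ.δ r) (hw : w ∈ δW.δ q) (hwg : w ∈ g z) :
    Realizes δZ δW g fun r' => if r' = r then Part.some q else G r' := by
  intro r' z' hz' hgz'
  by_cases hr : r' = r
  · subst hr
    obtain rfl := Part.mem_unique hz' hz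
    exact ⟨q, by simp, w, hw, hwg⟩
  · simpa [hr] using hG r' z' hz' hgz'

theorem exists_realizes_dom (δZ : RepSp Z) (δW : RepSp W) (g : Z → Set W) :
    ∃ G : (ℕ → ℕ) →. (ℕ → ℕ), Realizes δZ δW g G ∧
      ∀ r, (G r).Dom → ∃ z ∈ δZ.δ r, (g z).Nonempty := by
  refine ⟨fun r => Part.mk (∃ q, ∃ z ∈ δZ.δ r, ∃ w ∈ δW.δ q, w ∈ g z) Classical.choose,
    fun r z hz ⟨w, hwg⟩ => ?_, fun r h => ?_⟩
  · obtain ⟨q, hq⟩ := δW.surj w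
    have hdom : ∃ q, ∃ z ∈ δZ.δ r, ∃ w ∈ δW.δ q, w ∈ g z := ⟨q, z, hz, w, hq, hwg⟩
    obtain ⟨z', hz', w', hw', hwg'⟩ := Classical.choose_spec hdom
    obtain rfl := Part.mem_unique hz hz'
    exact ⟨_, mem_part_mk hdom rfl, w', hw', hwg'⟩
  · obtain ⟨z, hz, w, -, hwg⟩ := Classical.choose_spec h
    exact ⟨z, hz, w, hwg⟩

/-- Feed the reduction a realizer of `g` that is defined only on names of instances. -/
theorem exists_instance_of_reduction {H K : (ℕ → ℕ) →. (ℕ → ℕ)}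
    (hred : ∀ G, Realizes δZ δW g G →
      Realizes δX δY f fun p => (K p).bind fun r => (G r).bind fun q => H (pairB p q))
    {p : ℕ → ℕ} {x : X} (hx : x ∈ δX.δ p) (hfx : (f x).Nonempty) :
    ∃ r ∈ K p, ∃ z ∈ δZ.δ r, (g z).Nonempty := by
  obtain ⟨G, hG, hGdom⟩ := exists_realizes_dom δZ δW g
  obtain ⟨_, ht, -⟩ := hred G hG p x hx hfx
  simp only [Part.mem_bind_iff] at ht
  obtain ⟨r, hr, q, hq, -⟩ := ht
  exact ⟨r, hr, hGdom r (Part.dom_iff_mem.mpr ⟨q, hq⟩)⟩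

theorem WRed.of_comp_primrec {σK σH : ℕ → ℕ} (hσK : Primrec σK) (hσH : Primrec σH)
    (h : ∀ p x, x ∈ δX.δ p → (f x).Nonempty → ∃ z ∈ δZ.δ (p ∘ σK), (g z).Nonempty ∧
      ∀ q, ∀ w ∈ δW.δ q, w ∈ g z → ∃ y ∈ δY.δ (q ∘ σH), y ∈ f x) :
    WRed δX δY δZ δW f g := by
  refine ⟨fun r => Part.some (r ∘ fun k => 2 * σH k + 1), fun p => Part.some (p ∘ σK),
    .comp_primrec (Primrec.nat_double_succ.comp hσH), .comp_primrec hσK,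
    fun G hG p x hx hfx => ?_⟩
  obtain ⟨z, hz, hgz, hsol⟩ := h p x hx hfx
  obtain ⟨q, hq, w, hw, hwg⟩ := hG _ z hz hgz
  obtain ⟨y, hy, hyf⟩ := hsol q w hw hwg
  refine ⟨q ∘ σH, ?_, y, hy, hyf⟩
  simp only [Part.mem_bind_iff, Part.mem_some_iff]
  exact ⟨_, rfl, q, hq, funext fun k => (pairB_two_mul_add_one p q (σH k)).symm⟩

variable (δX δY f)

theorem WRed.self_parallelProblem :
    WRed δX δY (seqRep δX) (seqRep δY) f (parallelProblem f) :=
  WRed.of_comp_primrec (σK := fun m => m.unpair.2) (σH := Nat.pair 0)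
    (Primrec.snd.comp .unpair) (Primrec₂.natPair.comp (.const 0) .id)
    fun p x hx ⟨y, hy⟩ =>
      ⟨fun _ => x, mem_seqRep_iff.mpr fun i => by convert hx using 2; funext k; simp [proj],
        ⟨fun _ => y, fun _ => hy⟩, fun _ w hw hwf => ⟨w 0, mem_seqRep_iff.mp hw 0, hwf 0⟩⟩

theorem WRed.parallelProblem_parallelProblem :
    WRed (seqRep (seqRep δX)) (seqRep (seqRep δY)) (seqRep δX) (seqRep δY)
      (parallelProblem (parallelProblem f)) (parallelProblem f) := by
  -- `σK ⟨⟨i, j⟩, k⟩ = ⟨i, ⟨j, k⟩⟩`, and `σH` is its inverse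
  refine WRed.of_comp_primrec
    (σK := fun m => Nat.pair m.unpair.1.unpair.1 (Nat.pair m.unpair.1.unpair.2 m.unpair.2))
    (σH := fun m => Nat.pair (Nat.pair m.unpair.1 m.unpair.2.unpair.1) m.unpair.2.unpair.2)
    (Primrec₂.natPair.comp (Primrec.fst.comp (Primrec.unpair.comp (Primrec.fst.comp .unpair)))
      (Primrec₂.natPair.comp (Primrec.snd.comp (Primrec.unpair.comp (Primrec.fst.comp .unpair)))
        (Primrec.snd.comp .unpair)))
    (Primrec₂.natPair.comp
      (Primrec₂.natPair.comp (Primrec.fst.comp .unpair)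
        (Primrec.fst.comp (Primrec.unpair.comp (Primrec.snd.comp .unpair))))
      (Primrec.snd.comp (Primrec.unpair.comp (Primrec.snd.comp .unpair))))
    fun P xs hxs ⟨ys, hys⟩ => ⟨fun a => xs a.unpair.1 a.unpair.2, ?_,
      ⟨fun a => ys a.unpair.1 a.unpair.2, fun a => hys _ _⟩,
      fun q w hw hwf =>
        ⟨fun i j => w (Nat.pair i j), ?_, fun i j => by simpa using hwf (Nat.pair i j)⟩⟩
  · refine mem_seqRep_iff.mpr fun a => ?_
    convert mem_seqRep_iff.mp (mem_seqRep_iff.mp hxs a.unpair.1) a.unpair.2 using 2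
    funext k
    simp [proj]
  · refine mem_seqRep_iff.mpr fun i => mem_seqRep_iff.mpr fun j => ?_
    convert mem_seqRep_iff.mp hw (Nat.pair i j) using 2
    funext k
    simp [proj]

variable {δX δY f}

theorem WRed.parallelProblem_mono (h : WRed δX δY δZ δW f g) :
    WRed (seqRep δX) (seqRep δY) (seqRep δZ) (seqRep δW)
      (parallelProblem f) (parallelProblem g) := by
  obtain ⟨H, K, hH, hK, hred⟩ := h
  refine ⟨componentwise H fun i j => 2 * Nat.pair i (j / 2) + j % 2, componentwise K Nat.pair,
    hH.componentwise ?_, hK.componentwise Primrec₂.natPair, fun G hG P xs hxs ⟨ys, hys⟩ => ?_⟩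
  · exact Primrec.nat_add.comp
      (Primrec.nat_double.comp (Primrec₂.natPair.comp .fst
        (Primrec.nat_div.comp .snd (.const 2))))
      (Primrec.nat_mod.comp .snd (.const 2))
  have hxs' := mem_seqRep_iff.mp hxs
  choose r hr z hz hgz using fun i => exists_instance_of_reduction hred (hxs' i) ⟨ys i, hys i⟩
  obtain ⟨q, hq, w, hw, hwg⟩ := hG (tuple r) z
    (mem_seqRep_iff.mpr fun i => by rw [proj_tuple]; exact hz i)
    ⟨fun i => (hgz i).some, fun i => (hgz i).some_mem⟩
  obtain ⟨G₀, hG₀, -⟩ := exists_realizes_dom δZ δW g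
  -- run the reduction with a realizer of `g` answering the `i`-th query by the `i`-th answer
  have hpost : ∀ i, ∃ t ∈ H (pairB (proj P i) (proj q i)), ∃ y ∈ δY.δ t, y ∈ f (xs i) := by
    intro i
    obtain ⟨t, ht, hyt⟩ := hred _ (hG₀.update (hz i) (mem_seqRep_iff.mp hw i) (hwg i))
      (proj P i) (xs i) (hxs' i) ⟨ys i, hys i⟩
    simp only [Part.mem_bind_iff] at ht
    obtain ⟨r', hr', q', hq', ht⟩ := ht
    obtain rfl := Part.mem_unique hr' (hr i)
    obtain rfl : q' = proj q i := by simpa using hq'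
    exact ⟨t, ht, hyt⟩
  choose t ht y hy hyf using hpost
  refine ⟨tuple t, ?_, y, mem_seqRep_iff.mpr fun i => by rw [proj_tuple]; exact hy i, hyf⟩
  simp only [Part.mem_bind_iff]
  refine ⟨tuple r, mem_componentwise_iff.mpr fun i => by rw [proj_tuple]; exact hr i, q, hq,
    mem_componentwise_iff.mpr fun i => ?_⟩
  rw [pairB_comp_interleave, proj_tuple]
  exact ht i

end Reductions

/-- parallelization is a closure operator with respect to `≤_W`. -/
theorem parallelization_closure_operator (X Y Z W : Type) (δX : RepSp X)
    (δY : RepSp Y) (δZ : RepSp Z) (δW : RepSp W) (f : X → Set Y) (g : Z → Set W) :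
    WRed δX δY (seqRep δX) (seqRep δY) f (parallelProblem f) ∧
    WRed (seqRep (seqRep δX)) (seqRep (seqRep δY)) (seqRep δX) (seqRep δY)
      (parallelProblem (parallelProblem f)) (parallelProblem f) ∧
    (WRed δX δY δZ δW f g →
      WRed (seqRep δX) (seqRep δY) (seqRep δZ) (seqRep δW)
        (parallelProblem f) (parallelProblem g)) :=
  ⟨.self_parallelProblem δX δY f, .parallelProblem_parallelProblem δX δY f,
    WRed.parallelProblem_mono⟩
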